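/- Each polynomial factor f_m(z) = 1 + 2z + 2z^2 + ... + 2z^m (m ≥ 1) has a log-concave coefficient sequence, and hence the product ∏_{m=1}^{n-1} f_m(z) has a log-concave (and therefore unimodal) coefficient sequence. -/

import Mathlib

/-!
A nonnegative sequence without internal zeros is log-concave exactly when its Toeplitz matrix
`(a (i - j))` is totally positive of order 2. The coefficients of `p * q` are obtained by applying
the Toeplitz matrix of `q` to the coefficients of `p`, so the `2 × 2` Cauchy–Binet inequality
(pair the terms indexed by `s` and `t`, then apply the rearrangement inequality) makes `p * q`
log-concave again. The coefficients `1, 2, …, 2` of each `f_m` are plainly log-concave.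
-/

open Polynomial Finset

/-- The factor `f_m(z) = 1 + 2z + 2z² + ⋯ + 2zᵐ`. -/
noncomputable def factorPoly (m : ℕ) : Polynomial ℕ :=
  1 + 2 * ∑ j ∈ Finset.Icc 1 m, Polynomial.X ^ j

theorem Finset.sum_sum_le_sum_sum_of_add_swap_le {ι R : Type*} [Semiring R] [LinearOrder R]
    [IsStrictOrderedRing R] {S : Finset ι} {A B : ι → ι → R}
    (h : ∀ s ∈ S, ∀ t ∈ S, A s t + A t s ≤ B s t + B t s) :
    ∑ s ∈ S, ∑ t ∈ S, A s t ≤ ∑ s ∈ S, ∑ t ∈ S, B s t := by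
  have double (C : ι → ι → R) :
      2 * ∑ s ∈ S, ∑ t ∈ S, C s t = ∑ s ∈ S, ∑ t ∈ S, (C s t + C t s) := by
    simp only [two_mul, sum_add_distrib]
    rw [sum_comm (f := fun t s => C s t)]
  refine le_of_mul_le_mul_left ?_ (zero_lt_two' R)
  rw [double, double]
  exact sum_le_sum fun s hs => sum_le_sum fun t ht => h s hs t ht

/-- The `2 × 2` Cauchy–Binet inequality for kernels that are totally positive of order 2. -/
theorem Finset.sum_mul_sum_le_sum_mul_sum_of_tp2 {ι R : Type*} [LinearOrder ι] [CommSemiring R]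
    [LinearOrder R] [IsStrictOrderedRing R] [ExistsAddOfLE R] (S : Finset ι) {f g F G : ι → R}
    (hfg : ∀ s ∈ S, ∀ t ∈ S, s ≤ t → f t * g s ≤ f s * g t)
    (hFG : ∀ s ∈ S, ∀ t ∈ S, s ≤ t → F t * G s ≤ F s * G t) :
    (∑ s ∈ S, f s * G s) * (∑ s ∈ S, g s * F s) ≤
      (∑ s ∈ S, f s * F s) * (∑ s ∈ S, g s * G s) := by
  simp only [sum_mul_sum]
  refine sum_sum_le_sum_sum_of_add_swap_le fun s hs t ht => ?_
  wlog hst : s ≤ t generalizing s t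
  · rw [add_comm, add_comm (f s * F s * _)]
    exact this t ht s hs (le_of_not_ge hst)
  calc f s * G s * (g t * F t) + f t * G t * (g s * F s)
      = (f t * g s) * (F s * G t) + (f s * g t) * (F t * G s) := by ring
    _ ≤ (f t * g s) * (F t * G s) + (f s * g t) * (F s * G t) :=
        mul_add_mul_le_mul_add_mul (hfg s hs t ht hst) (hFG s hs t ht hst)
    _ = f s * F s * (g t * G t) + f t * F t * (g s * G s) := by ring

namespace Polynomial

section Semiring

variable {R : Type*} [Semiring R]

def toeplitzRow (q : R[X]) (n s : ℕ) : R :=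
  if s ≤ n then q.coeff (n - s) else 0

theorem coeff_mul_eq_sum_range (p q : R[X]) {n N : ℕ} (hn : n < N) :
    (p * q).coeff n = ∑ s ∈ range N, p.coeff s * q.toeplitzRow n s := by
  rw [coeff_mul, Nat.sum_antidiagonal_eq_sum_range_succ_mk]
  refine sum_subset_zero_on_sdiff (range_subset_range.2 hn) (fun s hs => ?_)
    (fun s hs => by rw [toeplitzRow, if_pos (by simpa [Nat.lt_succ_iff] using hs)])
  have : n < s := by simpa [Nat.lt_succ_iff] using (mem_sdiff.1 hs).2
  rw [toeplitzRow, if_neg this.not_ge, mul_zero]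

end Semiring

variable {R : Type*} [CommSemiring R] [LinearOrder R]

/-- Nonnegative log-concave coefficients without internal zeros, normalised to a nonzero constant
term (a factor `X ^ k` can always be split off). -/
structure IsLogConcave (p : R[X]) : Prop where
  coeff_mul_coeff_add_two_le (k : ℕ) : p.coeff k * p.coeff (k + 2) ≤ p.coeff (k + 1) ^ 2
  coeff_pos {i : ℕ} : i ≤ p.natDegree → 0 < p.coeff i

namespace IsLogConcave

variable {p q : R[X]}

theorem coeff_nonneg (hp : p.IsLogConcave) (i : ℕ) : 0 ≤ p.coeff i := by
  rcases le_or_gt i p.natDegree with hi | hi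
  · exact (hp.coeff_pos hi).le
  · rw [coeff_eq_zero_of_natDegree_lt hi]

theorem ne_zero (hp : p.IsLogConcave) : p ≠ 0 := by
  rintro rfl
  simpa using hp.coeff_pos (Nat.zero_le _)

theorem coeff_sub_one_mul_coeff_add_one_le (hp : p.IsLogConcave) {k : ℕ} (hk : 1 ≤ k) :
    p.coeff (k - 1) * p.coeff (k + 1) ≤ p.coeff k ^ 2 := by
  obtain ⟨k, rfl⟩ := Nat.exists_eq_add_of_le' hk
  simpa using hp.coeff_mul_coeff_add_two_le k

theorem coeff_mul_coeff_succ_le [IsStrictOrderedRing R] (hp : p.IsLogConcave) {i j : ℕ}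
    (hij : i ≤ j) :
    p.coeff i * p.coeff (j + 1) ≤ p.coeff (i + 1) * p.coeff j := by
  induction j, hij using Nat.le_induction with
  | base => rw [mul_comm]
  | succ j hij ih =>
    rcases le_or_gt j p.natDegree with hj | hj
    -- chain `ih` with log-concavity at `j`, then cancel `p.coeff j`, positive as there are no gaps
    · refine le_of_mul_le_mul_left ?_ (hp.coeff_pos hj)
      calc p.coeff j * (p.coeff i * p.coeff (j + 1 + 1))
          = p.coeff i * (p.coeff j * p.coeff (j + 2)) := by ring
        _ ≤ p.coeff i * p.coeff (j + 1) ^ 2 :=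
            mul_le_mul_of_nonneg_left (hp.coeff_mul_coeff_add_two_le j) (hp.coeff_nonneg i)
        _ = p.coeff i * p.coeff (j + 1) * p.coeff (j + 1) := by ring
        _ ≤ p.coeff (i + 1) * p.coeff j * p.coeff (j + 1) :=
            mul_le_mul_of_nonneg_right ih (hp.coeff_nonneg _)
        _ = p.coeff j * (p.coeff (i + 1) * p.coeff (j + 1)) := by ring
    · rw [coeff_eq_zero_of_natDegree_lt (by omega : p.natDegree < j + 1 + 1), mul_zero]
      exact mul_nonneg (hp.coeff_nonneg _) (hp.coeff_nonneg _)

theorem one [IsStrictOrderedRing R] : (1 : R[X]).IsLogConcave where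
  coeff_mul_coeff_add_two_le k := by simp [coeff_one]
  coeff_pos hi := by simp_all

theorem coeff_mul_coeff_X_mul_le [IsStrictOrderedRing R] (hp : p.IsLogConcave) {s t : ℕ}
    (hst : s ≤ t) : p.coeff t * (X * p).coeff s ≤ p.coeff s * (X * p).coeff t := by
  rcases t with _ | t
  · rw [Nat.le_zero.1 hst]
  rcases s with _ | s
  · rw [coeff_X_mul_zero, mul_zero, coeff_X_mul]
    exact mul_nonneg (hp.coeff_nonneg _) (hp.coeff_nonneg _)
  · rw [coeff_X_mul, coeff_X_mul, mul_comm]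
    exact hp.coeff_mul_coeff_succ_le (by omega)

theorem toeplitzRow_nonneg (hp : p.IsLogConcave) (n s : ℕ) : 0 ≤ p.toeplitzRow n s := by
  unfold toeplitzRow
  split_ifs
  exacts [hp.coeff_nonneg _, le_rfl]

theorem toeplitzRow_mul_toeplitzRow_succ_le [IsStrictOrderedRing R] (hp : p.IsLogConcave)
    {n s t : ℕ} (hst : s ≤ t) :
    p.toeplitzRow n t * p.toeplitzRow (n + 1) s ≤ p.toeplitzRow n s * p.toeplitzRow (n + 1) t := by
  by_cases ht : t ≤ n
  · simp only [toeplitzRow, if_pos ht, if_pos (hst.trans ht), if_pos (by omega : s ≤ n + 1),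
      if_pos (by omega : t ≤ n + 1)]
    rw [show n + 1 - s = n - s + 1 by omega, show n + 1 - t = n - t + 1 by omega,
      mul_comm (p.coeff (n - s))]
    exact hp.coeff_mul_coeff_succ_le (by omega)
  · rw [toeplitzRow, if_neg ht, zero_mul]
    exact mul_nonneg (hp.toeplitzRow_nonneg _ _) (hp.toeplitzRow_nonneg _ _)

theorem mul [IsStrictOrderedRing R] [ExistsAddOfLE R] (hp : p.IsLogConcave)
    (hq : q.IsLogConcave) : (p * q).IsLogConcave where
  coeff_mul_coeff_add_two_le k := by
    -- writing `(p * q).coeff n` once through `p` and once through `X * p`, Cauchy–Binet compares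
    -- `(p * q).coeff (k + 1) ^ 2` with `(p * q).coeff k * (p * q).coeff (k + 2)`
    have hsum (P : R[X]) {n : ℕ} (hn : n < k + 3) :
        ∑ s ∈ range (k + 3), P.coeff s * q.toeplitzRow n s = (P * q).coeff n :=
      (coeff_mul_eq_sum_range P q hn).symm
    have hX (n : ℕ) : (X * p * q).coeff (n + 1) = (p * q).coeff n := by
      rw [mul_assoc, coeff_X_mul]
    have key := sum_mul_sum_le_sum_mul_sum_of_tp2 (range (k + 3))
      (fun _ _ _ _ => hp.coeff_mul_coeff_X_mul_le)
      (fun _ _ _ _ => hq.toeplitzRow_mul_toeplitzRow_succ_le (n := k + 1))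
    rwa [hsum p (by omega), hsum p (by omega), hsum (X * p) (by omega), hsum (X * p) (by omega),
      hX, hX, mul_comm, ← sq] at key
  coeff_pos {i} hi := by
    rw [natDegree_mul hp.ne_zero hq.ne_zero] at hi
    rw [coeff_mul]
    refine sum_pos' (fun _ _ => mul_nonneg (hp.coeff_nonneg _) (hq.coeff_nonneg _))
      ⟨(min i p.natDegree, i - min i p.natDegree), ?_, ?_⟩
    · exact mem_antidiagonal.2 (by omega)
    · exact mul_pos (hp.coeff_pos (min_le_right _ _)) (hq.coeff_pos (by omega))

end IsLogConcave

end Polynomial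

theorem factorPoly_coeff (m k : ℕ) :
    (factorPoly m).coeff k = if k = 0 then 1 else if k ≤ m then 2 else 0 := by
  rw [factorPoly, coeff_add, coeff_ofNat_mul, finsetSum_coeff]
  simp only [coeff_X_pow, coeff_one]
  rw [sum_ite_eq (Icc 1 m) k (fun _ => (1 : ℕ))]
  simp only [mem_Icc]
  split_ifs <;> omega

theorem factorPoly_natDegree (m : ℕ) : (factorPoly m).natDegree = m := by
  refine le_antisymm (natDegree_le_iff_coeff_eq_zero.2 fun k hk => ?_) (le_natDegree_of_ne_zero ?_)
  all_goals
    rw [factorPoly_coeff]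
    split_ifs <;> omega

theorem factorPoly_isLogConcave (m : ℕ) : (factorPoly m).IsLogConcave where
  coeff_mul_coeff_add_two_le k := by
    simp only [factorPoly_coeff]
    split_ifs <;> norm_num <;> omega
  coeff_pos {i} hi := by
    rw [factorPoly_natDegree] at hi
    rw [factorPoly_coeff]
    split_ifs <;> omega

theorem factorPoly_log_concave_and_prod :
    (∀ m : ℕ, 1 ≤ m → ∀ k : ℕ, 1 ≤ k →
      (factorPoly m).coeff (k - 1) * (factorPoly m).coeff (k + 1) ≤
        (factorPoly m).coeff k ^ 2) ∧
    ∀ n : ℕ, ∀ k : ℕ, 1 ≤ k →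
      (∏ m ∈ Finset.Icc 1 (n - 1), factorPoly m).coeff (k - 1) *
          (∏ m ∈ Finset.Icc 1 (n - 1), factorPoly m).coeff (k + 1) ≤
        (∏ m ∈ Finset.Icc 1 (n - 1), factorPoly m).coeff k ^ 2 :=
  ⟨fun m _ _ hk => (factorPoly_isLogConcave m).coeff_sub_one_mul_coeff_add_one_le hk,
    fun _ _ hk =>
      (prod_induction factorPoly IsLogConcave (fun _ _ => IsLogConcave.mul) IsLogConcave.one
        fun m _ => factorPoly_isLogConcave m).coeff_sub_one_mul_coeff_add_one_le hk⟩
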